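/- arXiv:2410.02151 — 2 statements merged into one kernel-verified Lean document; each statement's English description precedes it below -/
import Mathlib

section
/- (Lemma on the truncated map Φ_N, self-mapping part.) Let d ≥ 1, let D ⊆ ℝ^d be a bounded measurable set with positive finite Lebesgue measure, and let T > 0, C_L > 0, R > 0, M' > 0. Let F : ℝ → ℝ satisfy |F(z)| ≤ C_F |z|^p for all z ∈ ℝ, with p > 1 and C_F > 0. Let G_N : (0,T)×D×D → ℝ be measurable with ess sup_{(t,x)∈(0,T)×D} ∫₀ᵗ ∫_D |G_N(t−τ,x,y)| dy dτ ≤ 2 C_L T and ess sup_{(t,x)∈(0,T)×D} ∫_D |G_N(t,x,y)| dy ≤ 2 C_L. Assume 2 C_L R + 2 C_L T C_F (M')^p ≤ M'. Then for every u₀ ∈ L^∞(D) with ‖u₀‖_{L^∞} ≤ R and every measurable u : (0,T)×D → ℝ with ess sup_{(t,x)} |u(t,x)| ≤ M', the function Φ_{N,u₀}[u](t,x) := ∫_D G_N(t,x,y) u₀(y) dy + ∫₀ᵗ ∫_D G_N(t−τ,x,y) F(u(τ,y)) dy dτ satisfies ess sup_{(t,x)∈(0,T)×D} |Φ_{N,u₀}[u](t,x)|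 ≤ M'. -/
open MeasureTheory ENNReal Set Filter

noncomputable section

/-- Euclidean space `ℝ^d`. -/
abbrev Esp (d : ℕ) := EuclideanSpace ℝ (Fin d)

/-- `L^q` seminorm (with exponent `q ∈ [1,∞]` as an `ℝ≥0∞`) of an `ℝ≥0∞`-valued function. -/
def eLp {α : Type*} [MeasurableSpace α] (μ : Measure α) (q : ℝ≥0∞) (f : α → ℝ≥0∞) : ℝ≥0∞ :=
  if q = ⊤ then essSup f μ else (∫⁻ a, f a ^ q.toReal ∂μ) ^ (1 / q.toReal)

/-- The `L^q(D)` norm of `f : ℝ^d → ℝ`. -/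
def lqNorm {d : ℕ} (D : Set (Esp d)) (q : ℝ≥0∞) (f : Esp d → ℝ) : ℝ≥0∞ :=
  eLp (volume.restrict D) q fun x => (‖f x‖₊ : ℝ≥0∞)

/-- The mixed `L^r(0,T;L^s(D))` norm of `u : (0,T) × D → ℝ`. -/
def mixedNorm {d : ℕ} (D : Set (Esp d)) (T : ℝ) (r s : ℝ≥0∞) (u : ℝ → Esp d → ℝ) : ℝ≥0∞ :=
  eLp (volume.restrict (Ioo (0 : ℝ) T)) r fun t => lqNorm D s (u t)

/-- `1/r` as a real number, with the convention `1/∞ = 0`. -/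
def invE (r : ℝ≥0∞) : ℝ := (1 / r).toReal

/-- The Duhamel map `Φ_{u₀}` associated with kernel `G`, nonlinearity `F` and data `u₀`. -/
def duhamel {d : ℕ} (D : Set (Esp d)) (G : ℝ → Esp d → Esp d → ℝ) (F : ℝ → ℝ)
    (u₀ : Esp d → ℝ) (u : ℝ → Esp d → ℝ) : ℝ → Esp d → ℝ := fun t x =>
  (∫ y in D, G t x y * u₀ y) + ∫ τ in Ioo (0 : ℝ) t, ∫ y in D, G (t - τ) x y * F (u τ y)

/-- The restricted product measure on `(0,T) × D`. -/
def prodTD {d : ℕ} (D : Set (Esp d)) (T : ℝ) : Measure (ℝ × Esp d) :=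
  (volume.restrict (Ioo (0 : ℝ) T)).prod (volume.restrict D)

/-- The `L^∞((0,T) × D)` norm (essential supremum over the product measure). -/
def essSupNorm {d : ℕ} (D : Set (Esp d)) (T : ℝ) (u : ℝ → Esp d → ℝ) : ℝ≥0∞ :=
  essSup (fun q : ℝ × Esp d => (‖u q.1 q.2‖₊ : ℝ≥0∞)) (prodTD D T)

/-- Assumption 1: smoothing estimate for the kernel `G`. -/
def SmoothingEstimate {d : ℕ} (D : Set (Esp d)) (G : ℝ → Esp d → Esp d → ℝ)
    (C_L ν : ℝ) : Prop :=
  ∀ q₁ q₂ : ℝ≥0∞, 1 ≤ q₁ → q₁ ≤ q₂ → ∀ t ∈ Ioc (0 : ℝ) 1, ∀ g : Esp d → ℝ, Measurable g →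
    lqNorm D q₂ (fun x => ∫ y in D, G t x y * g y) ≤
      ENNReal.ofReal (C_L * t ^ (-(ν * (invE q₁ - invE q₂)))) * lqNorm D q₁ g

/-- Assumption 2 on the nonlinearity `F`. -/
def NonlinearityAssumption (F : ℝ → ℝ) (C_F p : ℝ) : Prop :=
  ContDiff ℝ 1 F ∧ F 0 = 0 ∧
    ∀ z₁ z₂ : ℝ, |F z₁ - F z₂| ≤ C_F * (max |z₁| |z₂|) ^ (p - 1) * |z₁ - z₂|

/-- Iterated mixed norm `‖‖K(t−τ,x,y)‖_{L^{r'}_τ(0,t;L^{s'}_y)}‖_{L^r_t(0,T;L^s_x)}`. -/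
def kernelNorm₁ {d : ℕ} (D : Set (Esp d)) (T : ℝ) (r s r' s' : ℝ≥0∞)
    (K : ℝ → Esp d → Esp d → ℝ) : ℝ≥0∞ :=
  eLp (volume.restrict (Ioo (0 : ℝ) T)) r fun t =>
    eLp (volume.restrict D) s fun x =>
      eLp (volume.restrict (Ioo (0 : ℝ) t)) r' fun τ =>
        eLp (volume.restrict D) s' fun y => (‖K (t - τ) x y‖₊ : ℝ≥0∞)

/-- Iterated mixed norm `‖‖K(t,x,·)‖_{L^{s'}_y(D)}‖_{L^r_t(0,T;L^s_x)}`. -/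
def kernelNorm₂ {d : ℕ} (D : Set (Esp d)) (T : ℝ) (r s s' : ℝ≥0∞)
    (K : ℝ → Esp d → Esp d → ℝ) : ℝ≥0∞ :=
  eLp (volume.restrict (Ioo (0 : ℝ) T)) r fun t =>
    eLp (volume.restrict D) s fun x =>
      eLp (volume.restrict D) s' fun y => (‖K t x y‖₊ : ℝ≥0∞)

section

variable {α β : Type*} [MeasurableSpace α] [MeasurableSpace β]

theorem ae_le_of_essSup_le {μ : Measure α} {f : α → ℝ≥0∞} {c : ℝ≥0∞} (h : essSup f μ ≤ c) :
    ∀ᵐ a ∂μ, f a ≤ c :=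
  (ENNReal.ae_le_essSup f).mono fun _ ha => ha.trans h

theorem ae_fst_mem_of_prod_restrict {μ : Measure α} (ν : Measure β) {s : Set α}
    (hs : MeasurableSet s) : ∀ᵐ q ∂(μ.restrict s).prod ν, q.1 ∈ s :=
  Measure.quasiMeasurePreserving_fst.ae (ae_restrict_mem hs)

theorem enorm_integral_mul_le {μ : Measure α} {G g : α → ℝ} {c : ℝ≥0∞} (hc : c ≠ ∞)
    (hg : ∀ᵐ a ∂μ, ‖g a‖ₑ ≤ c) : ‖∫ a, G a * g a ∂μ‖ₑ ≤ (∫⁻ a, ‖G a‖ₑ ∂μ) * c :=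
  calc ‖∫ a, G a * g a ∂μ‖ₑ ≤ ∫⁻ a, ‖G a‖ₑ * ‖g a‖ₑ ∂μ := by
        simpa only [enorm_mul] using enorm_integral_le_lintegral_enorm (μ := μ) fun a => G a * g a
    _ ≤ ∫⁻ a, ‖G a‖ₑ * c ∂μ := lintegral_mono_ae (hg.mono fun _ ha => by gcongr)
    _ = (∫⁻ a, ‖G a‖ₑ ∂μ) * c := lintegral_mul_const' _ _ hc

theorem enorm_integral_integral_mul_le {μ : Measure α} {ν : Measure β} {G g : β → α → ℝ}
    {c : ℝ≥0∞} (hc : c ≠ ∞) (hg : ∀ᵐ b ∂ν, ∀ᵐ a ∂μ, ‖g b a‖ₑ ≤ c) :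
    ‖∫ b, ∫ a, G b a * g b a ∂μ ∂ν‖ₑ ≤ (∫⁻ b, ∫⁻ a, ‖G b a‖ₑ ∂μ ∂ν) * c :=
  calc ‖∫ b, ∫ a, G b a * g b a ∂μ ∂ν‖ₑ ≤ ∫⁻ b, ‖∫ a, G b a * g b a ∂μ‖ₑ ∂ν :=
        enorm_integral_le_lintegral_enorm _
    _ ≤ ∫⁻ b, (∫⁻ a, ‖G b a‖ₑ ∂μ) * c ∂ν :=
        lintegral_mono_ae (hg.mono fun _ hb => enorm_integral_mul_le hc hb)
    _ = (∫⁻ b, ∫⁻ a, ‖G b a‖ₑ ∂μ ∂ν) * c := lintegral_mul_const' _ _ hc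

end

theorem enorm_le_of_abs_le_mul_rpow {F : ℝ → ℝ} {C p M z : ℝ} (hC : 0 ≤ C) (hp : 0 ≤ p)
    (hM : 0 ≤ M) (hFz : |F z| ≤ C * |z| ^ p) (hz : ‖z‖ₑ ≤ ENNReal.ofReal M) :
    ‖F z‖ₑ ≤ ENNReal.ofReal (C * M ^ p) := by
  rw [Real.enorm_eq_ofReal_abs] at hz ⊢
  rw [ENNReal.ofReal_le_ofReal_iff hM] at hz
  exact ENNReal.ofReal_le_ofReal
    (hFz.trans (mul_le_mul_of_nonneg_left (Real.rpow_le_rpow (abs_nonneg z) hz hp) hC))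

theorem enorm_duhamel_le {d : ℕ} {D : Set (Esp d)} {G : ℝ → Esp d → Esp d → ℝ} {F : ℝ → ℝ}
    {u₀ : Esp d → ℝ} {u : ℝ → Esp d → ℝ} {t : ℝ} {a b : ℝ≥0∞} (ha : a ≠ ∞) (hb : b ≠ ∞)
    (hu₀ : ∀ᵐ y ∂volume.restrict D, ‖u₀ y‖ₑ ≤ a)
    (hFu : ∀ᵐ τ ∂volume.restrict (Ioo 0 t), ∀ᵐ y ∂volume.restrict D, ‖F (u τ y)‖ₑ ≤ b)
    (x : Esp d) :
    ‖duhamel D G F u₀ u t x‖ₑ ≤ (∫⁻ y in D, ‖G t x y‖ₑ) * a +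
      (∫⁻ τ in Ioo 0 t, ∫⁻ y in D, ‖G (t - τ) x y‖ₑ) * b :=
  (enorm_add_le _ _).trans
    (add_le_add (enorm_integral_mul_le ha hu₀) (enorm_integral_integral_mul_le hb hFu))

theorem lqNorm_top {d : ℕ} (D : Set (Esp d)) (f : Esp d → ℝ) :
    lqNorm D ⊤ f = essSup (fun x => ‖f x‖ₑ) (volume.restrict D) := by
  simp [lqNorm, eLp, enorm_eq_nnnorm]

theorem truncated_map_self_mapping_general
    {d : ℕ} (D : Set (Esp d))
    (T C_L R M' C_F p : ℝ) (hT : 0 < T) (hCL : 0 < C_L) (hR : 0 < R) (hM' : 0 < M')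
    (hCF : 0 < C_F) (hp : 1 < p)
    (F : ℝ → ℝ) (hF : ∀ z : ℝ, |F z| ≤ C_F * |z| ^ p)
    (G_N : ℝ → Esp d → Esp d → ℝ)
    (hG1 : essSup
        (fun q : ℝ × Esp d =>
          ∫⁻ τ in Ioo (0 : ℝ) q.1, ∫⁻ y in D, (‖G_N (q.1 - τ) q.2 y‖₊ : ℝ≥0∞))
        (prodTD D T) ≤ ENNReal.ofReal (2 * C_L * T))
    (hG2 : essSup (fun q : ℝ × Esp d => ∫⁻ y in D, (‖G_N q.1 q.2 y‖₊ : ℝ≥0∞)) (prodTD D T) ≤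
      ENNReal.ofReal (2 * C_L))
    (hsmall : 2 * C_L * R + 2 * C_L * T * C_F * M' ^ p ≤ M') :
    ∀ u₀ : Esp d → ℝ, Measurable u₀ → lqNorm D ⊤ u₀ ≤ ENNReal.ofReal R →
      ∀ u : ℝ → Esp d → ℝ, Measurable (Function.uncurry u) →
        essSupNorm D T u ≤ ENNReal.ofReal M' →
        essSupNorm D T (duhamel D G_N F u₀ u) ≤ ENNReal.ofReal M' := by
  intro u₀ _ hu₀ u _ hu
  have hFu : ∀ᵐ τ ∂volume.restrict (Ioo 0 T), ∀ᵐ y ∂volume.restrict D,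
      ‖F (u τ y)‖ₑ ≤ ENNReal.ofReal (C_F * M' ^ p) :=
    Measure.ae_ae_of_ae_prod <| (ae_le_of_essSup_le hu).mono fun q hq =>
      enorm_le_of_abs_le_mul_rpow hCF.le (by linarith) hM'.le (hF _) hq
  refine essSup_le_of_ae_le _ ?_
  filter_upwards [ae_le_of_essSup_le hG1, ae_le_of_essSup_le hG2,
    ae_fst_mem_of_prod_restrict _ measurableSet_Ioo] with ⟨t, x⟩ hG1tx hG2tx ht
  calc ‖duhamel D G_N F u₀ u t x‖ₑ
      ≤ (∫⁻ y in D, ‖G_N t x y‖ₑ) * ENNReal.ofReal R +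
          (∫⁻ τ in Ioo 0 t, ∫⁻ y in D, ‖G_N (t - τ) x y‖ₑ) * ENNReal.ofReal (C_F * M' ^ p) :=
        enorm_duhamel_le ENNReal.ofReal_ne_top ENNReal.ofReal_ne_top
          (ae_le_of_essSup_le ((lqNorm_top D u₀).symm.trans_le hu₀))
          (ae_restrict_of_ae_restrict_of_subset (Ioo_subset_Ioo_right ht.2.le) hFu) x
    _ ≤ ENNReal.ofReal (2 * C_L) * ENNReal.ofReal R +
          ENNReal.ofReal (2 * C_L * T) * ENNReal.ofReal (C_F * M' ^ p) := by
        gcongr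
        exacts [hG2tx, hG1tx]
    _ = ENNReal.ofReal (2 * C_L * R + 2 * C_L * T * C_F * M' ^ p) := by
        rw [← ENNReal.ofReal_mul (by positivity), ← ENNReal.ofReal_mul (by positivity),
          ← ENNReal.ofReal_add (by positivity) (by positivity), mul_assoc (2 * C_L * T)]
    _ ≤ ENNReal.ofReal M' := ENNReal.ofReal_le_ofReal hsmall

/-- the truncated map `Φ_N` maps the ball `B_{L^∞(0,T;L^∞)}(M')` into itself. -/
theorem truncated_map_self_mapping
    {d : ℕ} (hd : 1 ≤ d) (D : Set (Esp d)) (hDmeas : MeasurableSet D)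
    (hDbdd : Bornology.IsBounded D) (hDpos : 0 < volume D) (hDfin : volume D ≠ ⊤)
    (T C_L R M' C_F p : ℝ) (hT : 0 < T) (hCL : 0 < C_L) (hR : 0 < R) (hM' : 0 < M')
    (hCF : 0 < C_F) (hp : 1 < p)
    (F : ℝ → ℝ) (hF : ∀ z : ℝ, |F z| ≤ C_F * |z| ^ p)
    (G_N : ℝ → Esp d → Esp d → ℝ)
    (hG1 : essSup
        (fun q : ℝ × Esp d =>
          ∫⁻ τ in Ioo (0 : ℝ) q.1, ∫⁻ y in D, (‖G_N (q.1 - τ) q.2 y‖₊ : ℝ≥0∞))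
        (prodTD D T) ≤ ENNReal.ofReal (2 * C_L * T))
    (hG2 : essSup (fun q : ℝ × Esp d => ∫⁻ y in D, (‖G_N q.1 q.2 y‖₊ : ℝ≥0∞)) (prodTD D T) ≤
      ENNReal.ofReal (2 * C_L))
    (hsmall : 2 * C_L * R + 2 * C_L * T * C_F * M' ^ p ≤ M') :
    ∀ u₀ : Esp d → ℝ, Measurable u₀ → lqNorm D ⊤ u₀ ≤ ENNReal.ofReal R →
      ∀ u : ℝ → Esp d → ℝ, Measurable (Function.uncurry u) →
        essSupNorm D T u ≤ ENNReal.ofReal M' →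
        essSupNorm D T (duhamel D G_N F u₀ u) ≤ ENNReal.ofReal M' :=
  truncated_map_self_mapping_general D T C_L R M' C_F p hT hCL hR hM' hCF hp F hF G_N hG1 hG2 hsmall
end
end

section
/- (Lemma on the truncated map Φ_N, approximation part.) Let d ≥ 1, let D ⊆ ℝ^d be a bounded measurable set with positive finite Lebesgue measure |D|, let T > 0, ε > 0, and let r, s ∈ [1,∞] with Hölder conjugates r', s'. Let F : ℝ → ℝ be measurable, u₀ ∈ L^∞(D), and let G, G_N : (0,T)×D×D → ℝ be measurable kernels satisfying the truncation-error bounds ‖ ‖G(t−τ,x,y) − G_N(t−τ,x,y)‖_{L^{r'}_τ(0,t;L^{s'}_y)} ‖_{L^r_t(0,T;L^s_x)} ≤ ε and ‖ ‖G(t,x,·) − G_N(t,x,·)‖_{L^{s'}_y(D)} ‖_{L^r_t(0,T;L^s_x)} ≤ ε. Then for every measurable u : (0,T)×D → ℝ with F(u) ∈ L^r(0,T;L^s), the Duhamel maps Φ_{u₀} (with kernel G) and Φ_{N,u₀} (with kernel G_N) satisfy ‖Φ_{u₀}[u] − Φ_{N,u₀}[u]‖_{L^r(0,T;L^s)} ≤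 ε ( |D|^{1/s} ‖u₀‖_{L^∞} + ‖F(u)‖_{L^r(0,T;L^s)} ). -/
open MeasureTheory ENNReal Set Filter

noncomputable section

/-!
Write `K = G - G_N`. Subtracting the two Duhamel formulas, `|Φ[u] - Φ_N[u]|(t, x)` is bounded by
`∫_D |K(t,x,y)| |u₀ y| dy + ∫_0^t ∫_D |K(t-τ,x,y)| |F(u(τ,y))| dy dτ`. Hölder in `y` bounds the
first term by `‖K(t,x,·)‖_{s'} |D|^{1/s} ‖u₀‖_∞`, and Hölder in `y` and then in `τ` bounds the
second by `‖‖K(t-τ,x,·)‖_{s'}‖_{L^{r'}_τ(0,t)} ‖F(u)‖_{L^r(0,T;L^s)}`. Minkowski's inequality in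
`L^r(0,T;L^s(D))` and the two bounds on `K` then give the claim.
-/

section eLp

variable {α : Type*} [MeasurableSpace α] {μ : Measure α} {q : ℝ≥0∞} {f g : α → ℝ≥0∞}

theorem eLp_eq_eLpNorm (hq : q ≠ 0) : eLp μ q f = eLpNorm f q μ := by
  unfold eLp
  split_ifs with hqt
  · simp [hqt, eLpNormEssSup]
  · simp [eLpNorm_eq_eLpNorm' hq hqt, eLpNorm']

theorem eLp_mono_ae (h : f ≤ᵐ[μ] g) : eLp μ q f ≤ eLp μ q g := by
  unfold eLp
  split_ifs
  · exact essSup_mono_ae h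
  · gcongr ?_ ^ _
    exact lintegral_mono_ae (h.mono fun a ha => by gcongr)

theorem eLp_mono_measure {ν : Measure α} (h : μ ≤ ν) : eLp μ q f ≤ eLp ν q f := by
  unfold eLp
  split_ifs
  · exact essSup_mono_measure (Measure.absolutelyContinuous_of_le h)
  · gcongr ?_ ^ _
    exact lintegral_mono' h le_rfl

theorem eLp_add_le (hq : 1 ≤ q) (hf : AEMeasurable f μ) (hg : AEMeasurable g μ) :
    eLp μ q (f + g) ≤ eLp μ q f + eLp μ q g := by
  have hq0 : q ≠ 0 := (zero_lt_one.trans_le hq).ne'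
  simp only [eLp_eq_eLpNorm hq0]
  exact eLpNorm_add_le hf.aestronglyMeasurable hg.aestronglyMeasurable hq

theorem eLp_mul_const_le (hq : q ≠ 0) {c : ℝ≥0∞} (hc : c ≠ ⊤) :
    eLp μ q (fun a => f a * c) ≤ eLp μ q f * c := by
  unfold eLp
  split_ifs with hqt
  · exact essSup_le_of_ae_le _ ((ae_le_essSup f).mono fun a ha => mul_le_mul_left ha c)
  · simp_rw [ENNReal.mul_rpow_of_nonneg _ _ ENNReal.toReal_nonneg]
    rw [lintegral_mul_const' _ _ (by finiteness), ENNReal.mul_rpow_of_nonneg _ _ (by positivity),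
      ← ENNReal.rpow_mul, mul_one_div_cancel (ENNReal.toReal_pos hq hqt).ne', ENNReal.rpow_one]

theorem eLp_le_measure_univ_rpow_mul_essSup (hq : q ≠ 0) :
    eLp μ q f ≤ μ univ ^ invE q * essSup f μ := by
  rcases eq_or_ne q ⊤ with rfl | hqt
  · simp [eLp, invE]
  rw [eLp_eq_eLpNorm hq, eLpNorm_eq_eLpNorm' hq hqt, mul_comm]
  convert eLpNorm'_le_eLpNormEssSup_mul_rpow_measure_univ (ENNReal.toReal_pos hq hqt) using 2
  · simp [eLpNormEssSup]
  · simp [invE]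

theorem lintegral_mul_le_eLp_mul_eLp {p q : ℝ≥0∞} (hpq : p.HolderConjugate q)
    (hf : AEMeasurable f μ) (hg : AEMeasurable g μ) :
    ∫⁻ a, f a * g a ∂μ ≤ eLp μ p f * eLp μ q g := by
  rcases eq_or_ne p ⊤ with rfl | hp
  · obtain rfl : q = 1 := by simpa using hpq.inv_add_inv_eq_one
    calc ∫⁻ a, f a * g a ∂μ ≤ ∫⁻ a, essSup f μ * g a ∂μ :=
          lintegral_mono_ae ((ae_le_essSup f).mono fun a ha => by gcongr)
      _ = eLp μ ⊤ f * eLp μ 1 g := by simp [eLp, lintegral_const_mul'' _ hg]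
  rcases eq_or_ne q ⊤ with rfl | hq
  · obtain rfl : p = 1 := by simpa using hpq.inv_add_inv_eq_one
    calc ∫⁻ a, f a * g a ∂μ ≤ ∫⁻ a, f a * essSup g μ ∂μ :=
          lintegral_mono_ae ((ae_le_essSup g).mono fun a ha => by gcongr)
      _ = eLp μ 1 f * eLp μ ⊤ g := by simp [eLp, lintegral_mul_const'' _ hf]
  simpa [eLp, hp, hq] using
    ENNReal.lintegral_mul_le_Lp_mul_Lq μ (hpq.toReal_of_ne_top hp hq) hf hg

end eLp

section Measurability

variable {α β : Type*} [MeasurableSpace α] [MeasurableSpace β] {ν : Measure β} [SFinite ν]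
  {f : α × β → ℝ≥0∞}

theorem Measurable.essSup_prod_right (hf : Measurable f) :
    Measurable fun a => essSup (fun b => f (a, b)) ν := by
  refine measurable_of_Iic fun c => ?_
  have hset : (fun a => essSup (fun b => f (a, b)) ν) ⁻¹' Iic c =
      (fun a => ν (Prod.mk a ⁻¹' {p | c < f p})) ⁻¹' {0} := by
    ext a
    simp only [Set.mem_preimage, Set.mem_Iic, Set.mem_singleton_iff, Set.preimage_ofPred_eq]
    simp_rw [← not_le]
    rw [← ae_iff]
    exact ⟨fun h => (ae_le_essSup _).mono fun b hb => hb.trans h, essSup_le_of_ae_le c⟩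
  rw [hset]
  exact measurable_measure_prodMk_left (measurableSet_lt measurable_const hf)
    (measurableSet_singleton 0)

theorem Measurable.eLp_prod_right (hf : Measurable f) (q : ℝ≥0∞) :
    Measurable fun a => eLp ν q fun b => f (a, b) := by
  unfold eLp
  split_ifs
  · exact hf.essSup_prod_right
  · exact ((hf.pow_const _).lintegral_prod_right').pow_const _

theorem Measurable.setLIntegral_Ioo {γ : Type*} [MeasurableSpace γ] {f : γ × ℝ → ℝ≥0∞}
    (hf : Measurable f) {a b : γ → ℝ} (ha : Measurable a) (hb : Measurable b) :
    Measurable fun c => ∫⁻ τ in Ioo (a c) (b c), f (c, τ) := by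
  have hS : MeasurableSet {p : γ × ℝ | p.2 ∈ Ioo (a p.1) (b p.1)} :=
    (measurableSet_lt (ha.comp measurable_fst) measurable_snd).inter
      (measurableSet_lt measurable_snd (hb.comp measurable_fst))
  simp_rw [← lintegral_indicator measurableSet_Ioo]
  exact (hf.indicator hS).lintegral_prod_right'

end Measurability

section MixedENorm

variable {α β : Type*} [MeasurableSpace α] [MeasurableSpace β] (μ : Measure α) (ν : Measure β)
  {r s : ℝ≥0∞} {g h : α → β → ℝ≥0∞}

/-- `mixedNorm`, `kernelNorm₁` and `kernelNorm₂` unfold to instances of `mixedENorm`. -/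
def mixedENorm (r s : ℝ≥0∞) (g : α → β → ℝ≥0∞) : ℝ≥0∞ :=
  eLp μ r fun t => eLp ν s (g t)

variable {μ ν}

theorem mixedENorm_mono (hgh : ∀ᵐ t ∂μ, ∀ x, g t x ≤ h t x) :
    mixedENorm μ ν r s g ≤ mixedENorm μ ν r s h :=
  eLp_mono_ae (hgh.mono fun _ ht => eLp_mono_ae (ae_of_all _ ht))

theorem mixedENorm_add_le [SFinite ν] (hr : 1 ≤ r) (hs : 1 ≤ s)
    (hg : Measurable (Function.uncurry g)) (hh : Measurable (Function.uncurry h)) :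
    mixedENorm μ ν r s (fun t x => g t x + h t x) ≤ mixedENorm μ ν r s g + mixedENorm μ ν r s h :=
  (eLp_mono_ae (ae_of_all _ fun _ => eLp_add_le hs (hg.comp measurable_prodMk_left).aemeasurable
    (hh.comp measurable_prodMk_left).aemeasurable)).trans
    (eLp_add_le hr (hg.eLp_prod_right s).aemeasurable (hh.eLp_prod_right s).aemeasurable)

theorem mixedENorm_mul_const_le (hr : r ≠ 0) (hs : s ≠ 0) {c : ℝ≥0∞} (hc : c ≠ ⊤) :
    mixedENorm μ ν r s (fun t x => g t x * c) ≤ mixedENorm μ ν r s g * c :=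
  (eLp_mono_ae (ae_of_all _ fun _ => eLp_mul_const_le hs hc)).trans (eLp_mul_const_le hr hc)

end MixedENorm

section Majorants

variable {β : Type*} [MeasurableSpace β] (ν : Measure β)

def initialMajorant (K : ℝ → β → β → ℝ) (u₀ : β → ℝ) (t : ℝ) (x : β) : ℝ≥0∞ :=
  ∫⁻ y, ‖K t x y‖ₑ * ‖u₀ y‖ₑ ∂ν

def forcingMajorant (K : ℝ → β → β → ℝ) (f : ℝ → β → ℝ) (t : ℝ) (x : β) : ℝ≥0∞ :=
  ∫⁻ τ in Ioo 0 t, ∫⁻ y, ‖K (t - τ) x y‖ₑ * ‖f τ y‖ₑ ∂ν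

variable {ν} [SFinite ν] {K : ℝ → β → β → ℝ}

theorem measurable_initialMajorant (hK : Measurable fun q : ℝ × β × β => K q.1 q.2.1 q.2.2)
    {u₀ : β → ℝ} (hu₀ : Measurable u₀) :
    Measurable (Function.uncurry (initialMajorant ν K u₀)) := by
  have hK' : Measurable fun z : (ℝ × β) × β => K z.1.1 z.1.2 z.2 :=
    hK.comp (f := fun z : (ℝ × β) × β => (z.1.1, z.1.2, z.2)) (by fun_prop)
  exact (hK'.enorm.mul (hu₀.comp measurable_snd).enorm).lintegral_prod_right'

theorem measurable_forcingMajorant (hK : Measurable fun q : ℝ × β × β => K q.1 q.2.1 q.2.2)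
    {f : ℝ → β → ℝ} (hf : Measurable (Function.uncurry f)) :
    Measurable (Function.uncurry (forcingMajorant ν K f)) := by
  have hK' : Measurable fun z : ((ℝ × β) × ℝ) × β => K (z.1.1.1 - z.1.2) z.1.1.2 z.2 :=
    hK.comp (f := fun z : ((ℝ × β) × ℝ) × β => (z.1.1.1 - z.1.2, z.1.1.2, z.2)) (by fun_prop)
  have hf' : Measurable fun z : ((ℝ × β) × ℝ) × β => f z.1.2 z.2 :=
    hf.comp (f := fun z : ((ℝ × β) × ℝ) × β => (z.1.2, z.2)) (by fun_prop)
  exact (hK'.enorm.mul hf'.enorm).lintegral_prod_right'.setLIntegral_Ioo measurable_const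
    measurable_fst

end Majorants

section MajorantBounds

variable {β : Type*} [MeasurableSpace β] {μ : Measure ℝ} {ν : Measure β}
  {r s r' s' : ℝ≥0∞} {K : ℝ → β → β → ℝ}

theorem initialMajorant_le (hss' : s.HolderConjugate s') {u₀ : β → ℝ} {t : ℝ} {x : β}
    (hK : Measurable (K t x)) (hu₀ : Measurable u₀) :
    initialMajorant ν K u₀ t x ≤
      eLp ν s' (fun y => ‖K t x y‖ₑ) * (ν univ ^ invE s * essSup (fun y => ‖u₀ y‖ₑ) ν) :=
  calc initialMajorant ν K u₀ t x
      ≤ eLp ν s' (fun y => ‖K t x y‖ₑ) * eLp ν s (fun y => ‖u₀ y‖ₑ) :=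
        lintegral_mul_le_eLp_mul_eLp hss'.symm hK.enorm.aemeasurable hu₀.enorm.aemeasurable
    _ ≤ eLp ν s' (fun y => ‖K t x y‖ₑ) * (ν univ ^ invE s * essSup (fun y => ‖u₀ y‖ₑ) ν) := by
        gcongr
        exact eLp_le_measure_univ_rpow_mul_essSup hss'.ne_zero

theorem mixedENorm_initialMajorant_le [IsFiniteMeasure ν] (hr : r ≠ 0)
    (hss' : s.HolderConjugate s') (hK : ∀ t x, Measurable (K t x)) {u₀ : β → ℝ}
    (hu₀ : Measurable u₀) (hu₀_fin : essSup (fun y => ‖u₀ y‖ₑ) ν ≠ ⊤) :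
    mixedENorm μ ν r s (initialMajorant ν K u₀) ≤
      mixedENorm μ ν r s (fun t x => eLp ν s' fun y => ‖K t x y‖ₑ) *
        (ν univ ^ invE s * essSup (fun y => ‖u₀ y‖ₑ) ν) :=
  (mixedENorm_mono (ae_of_all _ fun t x => initialMajorant_le hss' (hK t x) hu₀)).trans
    (mixedENorm_mul_const_le hr hss'.ne_zero <| ENNReal.mul_ne_top
      (ENNReal.rpow_ne_top_of_nonneg ENNReal.toReal_nonneg (measure_ne_top ν univ)) hu₀_fin)

variable [SFinite ν]

theorem forcingMajorant_le (hrr' : r.HolderConjugate r') (hss' : s.HolderConjugate s')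
    (hK : Measurable fun q : ℝ × β × β => K q.1 q.2.1 q.2.2) {f : ℝ → β → ℝ}
    (hf : Measurable (Function.uncurry f)) {t T : ℝ} (htT : t ≤ T) (x : β) :
    forcingMajorant ν K f t x ≤
      eLp (volume.restrict (Ioo 0 t)) r' (fun τ => eLp ν s' fun y => ‖K (t - τ) x y‖ₑ) *
        mixedENorm (volume.restrict (Ioo 0 T)) ν r s (fun τ y => ‖f τ y‖ₑ) := by
  have hKx : Measurable fun p : ℝ × β => ‖K (t - p.1) x p.2‖ₑ :=
    (hK.comp (by fun_prop : Measurable fun p : ℝ × β => (t - p.1, x, p.2))).enorm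
  calc forcingMajorant ν K f t x
      ≤ ∫⁻ τ in Ioo 0 t,
          eLp ν s' (fun y => ‖K (t - τ) x y‖ₑ) * eLp ν s (fun y => ‖f τ y‖ₑ) :=
        lintegral_mono fun τ => lintegral_mul_le_eLp_mul_eLp hss'.symm
          (hKx.comp measurable_prodMk_left).aemeasurable
          (hf.comp measurable_prodMk_left).enorm.aemeasurable
    _ ≤ eLp (volume.restrict (Ioo 0 t)) r' (fun τ => eLp ν s' fun y => ‖K (t - τ) x y‖ₑ) *
          eLp (volume.restrict (Ioo 0 t)) r (fun τ => eLp ν s fun y => ‖f τ y‖ₑ) :=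
        lintegral_mul_le_eLp_mul_eLp hrr'.symm (hKx.eLp_prod_right s').aemeasurable
          (hf.enorm.eLp_prod_right s).aemeasurable
    _ ≤ _ := by
        gcongr
        exact eLp_mono_measure (Measure.restrict_mono (Ioo_subset_Ioo_right htT) le_rfl)

theorem mixedENorm_forcingMajorant_le (hrr' : r.HolderConjugate r')
    (hss' : s.HolderConjugate s') (hK : Measurable fun q : ℝ × β × β => K q.1 q.2.1 q.2.2)
    {f : ℝ → β → ℝ} (hf : Measurable (Function.uncurry f)) {T : ℝ}
    (hf_fin : mixedENorm (volume.restrict (Ioo 0 T)) ν r s (fun τ y => ‖f τ y‖ₑ) ≠ ⊤) :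
    mixedENorm (volume.restrict (Ioo 0 T)) ν r s (forcingMajorant ν K f) ≤
      mixedENorm (volume.restrict (Ioo 0 T)) ν r s
          (fun t x => eLp (volume.restrict (Ioo 0 t)) r' fun τ =>
            eLp ν s' fun y => ‖K (t - τ) x y‖ₑ) *
        mixedENorm (volume.restrict (Ioo 0 T)) ν r s (fun τ y => ‖f τ y‖ₑ) := by
  refine (mixedENorm_mono ?_).trans (mixedENorm_mul_const_le hrr'.ne_zero hss'.ne_zero hf_fin)
  filter_upwards [ae_restrict_mem measurableSet_Ioo] with t ht x
  exact forcingMajorant_le hrr' hss' hK hf ht.2.le x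

end MajorantBounds

/-- Also valid when `f` or `g` is not integrable, where Bochner integrals take the junk value `0`;
this is why the difference of two Duhamel maps can still be estimated through `G - G_N`. -/
theorem enorm_integral_sub_integral_le {α E : Type*} [MeasurableSpace α] {μ : Measure α}
    [NormedAddCommGroup E] [NormedSpace ℝ E] {f g : α → E}
    (hfg : AEStronglyMeasurable (fun a => f a - g a) μ) :
    ‖(∫ a, f a ∂μ) - ∫ a, g a ∂μ‖ₑ ≤ ∫⁻ a, ‖f a - g a‖ₑ ∂μ := by
  by_cases hfg_int : Integrable (fun a => f a - g a) μ
  swap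
  · have : ¬HasFiniteIntegral (fun a => f a - g a) μ := fun h => hfg_int ⟨hfg, h⟩
    simp only [HasFiniteIntegral, not_lt, top_le_iff] at this
    simp [this]
  by_cases hf : Integrable f μ
  · have hg : Integrable g μ :=
      (hf.sub hfg_int).congr (ae_of_all _ fun a => sub_sub_cancel (f a) (g a))
    rw [← integral_sub hf hg]
    exact enorm_integral_le_lintegral_enorm _
  · have hg : ¬Integrable g μ := fun hg =>
      hf ((hfg_int.add hg).congr (ae_of_all _ fun a => sub_add_cancel (f a) (g a)))
    simp [integral_undef hf, integral_undef hg]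

theorem enorm_duhamel_sub_le {d : ℕ} (D : Set (Esp d)) {G G_N : ℝ → Esp d → Esp d → ℝ}
    (hG : Measurable fun q : ℝ × Esp d × Esp d => G q.1 q.2.1 q.2.2)
    (hG_N : Measurable fun q : ℝ × Esp d × Esp d => G_N q.1 q.2.1 q.2.2) (F : ℝ → ℝ)
    {u₀ : Esp d → ℝ} (hu₀ : Measurable u₀) {u : ℝ → Esp d → ℝ}
    (hFu : Measurable (Function.uncurry fun t x => F (u t x))) (t : ℝ) (x : Esp d) :
    ‖duhamel D G F u₀ u t x - duhamel D G_N F u₀ u t x‖ₑ ≤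
      initialMajorant (volume.restrict D) (fun t x y => G t x y - G_N t x y) u₀ t x +
        forcingMajorant (volume.restrict D) (fun t x y => G t x y - G_N t x y)
          (fun τ y => F (u τ y)) t x := by
  have kernel_sub : ∀ (a : ℝ) (g : Esp d → ℝ), Measurable g →
      ‖(∫ y in D, G a x y * g y) - ∫ y in D, G_N a x y * g y‖ₑ ≤
        ∫⁻ y in D, ‖G a x y - G_N a x y‖ₑ * ‖g y‖ₑ := by
    intro a g hg
    have hsec : Measurable fun y : Esp d => (a, x, y) := by fun_prop
    refine (enorm_integral_sub_integral_le ?_).trans_eq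
      (lintegral_congr fun y => by rw [← sub_mul, enorm_mul])
    exact (((hG.comp hsec).mul hg).sub ((hG_N.comp hsec).mul hg)).aestronglyMeasurable
  have duhamel_term : ∀ H : ℝ → Esp d → Esp d → ℝ,
      (Measurable fun q : ℝ × Esp d × Esp d => H q.1 q.2.1 q.2.2) →
      StronglyMeasurable fun τ => ∫ y in D, H (t - τ) x y * F (u τ y) := fun H hH =>
    ((hH.comp (by fun_prop : Measurable fun p : ℝ × Esp d => (t - p.1, x, p.2))).mul
      hFu).stronglyMeasurable.integral_prod_right'
  have hsplit : duhamel D G F u₀ u t x - duhamel D G_N F u₀ u t x =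
      ((∫ y in D, G t x y * u₀ y) - ∫ y in D, G_N t x y * u₀ y) +
        ((∫ τ in Ioo 0 t, ∫ y in D, G (t - τ) x y * F (u τ y)) -
          ∫ τ in Ioo 0 t, ∫ y in D, G_N (t - τ) x y * F (u τ y)) := by
    simp only [duhamel]
    ring
  rw [hsplit]
  refine (enorm_add_le _ _).trans (add_le_add (kernel_sub t u₀ hu₀) ?_)
  refine (enorm_integral_sub_integral_le ?_).trans (lintegral_mono fun τ => ?_)
  · exact ((duhamel_term G hG).sub (duhamel_term G_N hG_N)).aestronglyMeasurable
  · exact kernel_sub (t - τ) _ (hFu.comp measurable_prodMk_left)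

theorem mixedNorm_duhamel_sub_le {d : ℕ} (D : Set (Esp d)) (T : ℝ) {r s : ℝ≥0∞} (hr : 1 ≤ r)
    (hs : 1 ≤ s) {G G_N : ℝ → Esp d → Esp d → ℝ}
    (hG : Measurable fun q : ℝ × Esp d × Esp d => G q.1 q.2.1 q.2.2)
    (hG_N : Measurable fun q : ℝ × Esp d × Esp d => G_N q.1 q.2.1 q.2.2) (F : ℝ → ℝ)
    {u₀ : Esp d → ℝ} (hu₀ : Measurable u₀) {u : ℝ → Esp d → ℝ}
    (hFu : Measurable (Function.uncurry fun t x => F (u t x))) :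
    mixedNorm D T r s (fun t x => duhamel D G F u₀ u t x - duhamel D G_N F u₀ u t x) ≤
      mixedENorm (volume.restrict (Ioo 0 T)) (volume.restrict D) r s
          (initialMajorant (volume.restrict D) (fun t x y => G t x y - G_N t x y) u₀) +
        mixedENorm (volume.restrict (Ioo 0 T)) (volume.restrict D) r s
          (forcingMajorant (volume.restrict D) (fun t x y => G t x y - G_N t x y)
            (fun τ y => F (u τ y))) := by
  have hK := hG.sub hG_N
  refine (mixedENorm_mono (ae_of_all _ fun t x => ?_)).trans (mixedENorm_add_le hr hs
    (measurable_initialMajorant hK hu₀) (measurable_forcingMajorant hK hFu))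
  exact enorm_duhamel_sub_le D hG hG_N F hu₀ hFu t x

theorem truncated_map_approximation_general
    {d : ℕ} (D : Set (Esp d))
    (hDfin : volume D ≠ ⊤)
    (T ε : ℝ)
    (r s r' s' : ℝ≥0∞) (hr : 1 ≤ r) (hs : 1 ≤ s)
    (hr' : 1 / r + 1 / r' = 1) (hs' : 1 / s + 1 / s' = 1)
    (F : ℝ → ℝ) (hFm : Measurable F)
    (u₀ : Esp d → ℝ) (hu₀m : Measurable u₀) (hu₀fin : lqNorm D ⊤ u₀ ≠ ⊤)
    (G G_N : ℝ → Esp d → Esp d → ℝ)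
    (hGm : Measurable fun q : ℝ × Esp d × Esp d => G q.1 q.2.1 q.2.2)
    (hGNm : Measurable fun q : ℝ × Esp d × Esp d => G_N q.1 q.2.1 q.2.2)
    (hK1 : kernelNorm₁ D T r s r' s' (fun t x y => G t x y - G_N t x y) ≤ ENNReal.ofReal ε)
    (hK2 : kernelNorm₂ D T r s s' (fun t x y => G t x y - G_N t x y) ≤ ENNReal.ofReal ε) :
    ∀ u : ℝ → Esp d → ℝ, Measurable (Function.uncurry u) →
      mixedNorm D T r s (fun t x => F (u t x)) ≠ ⊤ →
      mixedNorm D T r s (fun t x => duhamel D G F u₀ u t x - duhamel D G_N F u₀ u t x) ≤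
        ENNReal.ofReal ε *
          (ENNReal.ofReal ((volume D).toReal ^ invE s) * lqNorm D ⊤ u₀ +
            mixedNorm D T r s fun t x => F (u t x)) := by
  intro u hu hFu_fin
  have hrr' : r.HolderConjugate r' :=
    ENNReal.holderConjugate_iff.mpr (by simpa only [one_div] using hr')
  have hss' : s.HolderConjugate s' :=
    ENNReal.holderConjugate_iff.mpr (by simpa only [one_div] using hs')
  have hK : Measurable fun q : ℝ × Esp d × Esp d => G q.1 q.2.1 q.2.2 - G_N q.1 q.2.1 q.2.2 :=
    hGm.sub hGNm
  have hFu : Measurable (Function.uncurry fun t x => F (u t x)) := hFm.comp hu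
  have : IsFiniteMeasure (volume.restrict D) := isFiniteMeasure_restrict.2 hDfin
  have hC : ENNReal.ofReal ((volume D).toReal ^ invE s) * lqNorm D ⊤ u₀ =
      volume.restrict D univ ^ invE s * essSup (fun y => ‖u₀ y‖ₑ) (volume.restrict D) := by
    rw [Measure.restrict_apply_univ, ENNReal.toReal_rpow, lqNorm_top,
      ENNReal.ofReal_toReal (ENNReal.rpow_ne_top_of_nonneg (y := invE s) toReal_nonneg hDfin)]
  calc mixedNorm D T r s (fun t x => duhamel D G F u₀ u t x - duhamel D G_N F u₀ u t x)
      ≤ _ := mixedNorm_duhamel_sub_le D T hr hs hGm hGNm F hu₀m hFu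
    _ ≤ kernelNorm₂ D T r s s' (fun t x y => G t x y - G_N t x y) *
          (ENNReal.ofReal ((volume D).toReal ^ invE s) * lqNorm D ⊤ u₀) +
        kernelNorm₁ D T r s r' s' (fun t x y => G t x y - G_N t x y) *
          mixedNorm D T r s fun t x => F (u t x) := by
        rw [hC]
        exact add_le_add
          (mixedENorm_initialMajorant_le hrr'.ne_zero hss'
            (fun t x => hK.comp (by fun_prop : Measurable fun y : Esp d => (t, x, y))) hu₀m
            (lqNorm_top D u₀ ▸ hu₀fin))
          (mixedENorm_forcingMajorant_le hrr' hss' hK hFu hFu_fin)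
    _ ≤ _ := by
        rw [mul_add]
        gcongr

/-- approximation of the Duhamel map by the truncated-kernel Duhamel map. -/
theorem truncated_map_approximation
    {d : ℕ} (hd : 1 ≤ d) (D : Set (Esp d)) (hDmeas : MeasurableSet D)
    (hDbdd : Bornology.IsBounded D) (hDpos : 0 < volume D) (hDfin : volume D ≠ ⊤)
    (T ε : ℝ) (hT : 0 < T) (hε : 0 < ε)
    (r s r' s' : ℝ≥0∞) (hr : 1 ≤ r) (hs : 1 ≤ s)
    (hr' : 1 / r + 1 / r' = 1) (hs' : 1 / s + 1 / s' = 1)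
    (F : ℝ → ℝ) (hFm : Measurable F)
    (u₀ : Esp d → ℝ) (hu₀m : Measurable u₀) (hu₀fin : lqNorm D ⊤ u₀ ≠ ⊤)
    (G G_N : ℝ → Esp d → Esp d → ℝ)
    (hGm : Measurable fun q : ℝ × Esp d × Esp d => G q.1 q.2.1 q.2.2)
    (hGNm : Measurable fun q : ℝ × Esp d × Esp d => G_N q.1 q.2.1 q.2.2)
    (hK1 : kernelNorm₁ D T r s r' s' (fun t x y => G t x y - G_N t x y) ≤ ENNReal.ofReal ε)
    (hK2 : kernelNorm₂ D T r s s' (fun t x y => G t x y - G_N t x y) ≤ ENNReal.ofReal ε) :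
    ∀ u : ℝ → Esp d → ℝ, Measurable (Function.uncurry u) →
      mixedNorm D T r s (fun t x => F (u t x)) ≠ ⊤ →
      mixedNorm D T r s (fun t x => duhamel D G F u₀ u t x - duhamel D G_N F u₀ u t x) ≤
        ENNReal.ofReal ε *
          (ENNReal.ofReal ((volume D).toReal ^ invE s) * lqNorm D ⊤ u₀ +
            mixedNorm D T r s fun t x => F (u t x)) :=
  truncated_map_approximation_general D hDfin T ε r s r' s' hr hs hr' hs' F hFm u₀ hu₀m hu₀fin G G_N
    hGm hGNm hK1 hK2
end
end
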